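/- Let p ≥ 2, n ≥ 1 and k ≥ 1 be integers and let h_1, …, h_n be (not necessarily distinct) sets. Call a p-element subset S ⊆ {1, …, n} intersecting if ⋂_{i ∈ S} h_i ≠ ∅. If at least k of the p-element subsets of {1, …, n} are intersecting, then there exists a nonempty subset A ⊆ {1, …, n} such that every index j ∈ A belongs to at least k/n intersecting p-element subsets S ⊆ A (that is, for every j ∈ A, the number of p-element subsets S of A with j ∈ S and ⋂_{i ∈ S} h_i ≠ ∅ is at least k/n). -/
import Mathlib

open Finset

/-- If at least `k` of the `p`-element subsets of `{1, …, n}` are intersecting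
(the sets they index have a common element), then there is a nonempty set `A`
of indices such that every index in `A` belongs to at least `k/n` intersecting
`p`-element subsets of `A`. -/
theorem dense_subfamily_lemma {α : Type*} (p n k : ℕ) (hp : 2 ≤ p) (hn : 1 ≤ n)
    (hk : 1 ≤ k) (h : Fin n → Set α)
    (hcount : k ≤ Nat.card {S : Finset (Fin n) // S.card = p ∧ (⋂ i ∈ S, h i).Nonempty}) :
    ∃ A : Finset (Fin n), A.Nonempty ∧ ∀ j ∈ A,
      (k : ℝ) / n ≤ Nat.card {S : Finset (Fin n) //
        S ⊆ A ∧ S.card = p ∧ j ∈ S ∧ (⋂ i ∈ S, h i).Nonempty} := by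
  classical
  set P : Finset (Fin n) → Prop := fun S => S.card = p ∧ (⋂ i ∈ S, h i).Nonempty with hP
  set f : Finset (Fin n) → ℕ := fun A => (A.powerset.filter P).card with hf
  set d : Fin n → Finset (Fin n) → ℕ :=
    fun j A => (A.powerset.filter (fun S => P S ∧ j ∈ S)).card with hd
  have hsplit : ∀ (A : Finset (Fin n)) (j : Fin n), j ∈ A → f A = f (A.erase j) + d j A := by
    intro A j hj
    have h1 := Finset.card_filter_add_card_filter_not
      (s := A.powerset.filter P) (p := fun S => j ∈ S)
    have e1 : (A.powerset.filter P).filter (fun S => j ∈ S)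
        = A.powerset.filter (fun S => P S ∧ j ∈ S) := by
      rw [Finset.filter_filter]
    have e2 : (A.powerset.filter P).filter (fun S => ¬ j ∈ S)
        = (A.erase j).powerset.filter P := by
      ext S
      simp only [Finset.mem_filter, Finset.mem_powerset, Finset.subset_erase]
      tauto
    rw [e1, e2] at h1
    simp only [hf, hd]
    omega
  have hne : ∀ A : Finset (Fin n), 1 ≤ f A → A.Nonempty := by
    intro A hA
    obtain ⟨S, hS⟩ := Finset.card_pos.mp hA
    simp only [Finset.mem_filter, Finset.mem_powerset, hP] at hS
    obtain ⟨hSA, hSp, -⟩ := hS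
    have : S.Nonempty := Finset.card_pos.mp (by omega)
    exact this.mono hSA
  have hcard1 : Nat.card {S : Finset (Fin n) // S.card = p ∧ (⋂ i ∈ S, h i).Nonempty}
      = f Finset.univ := by
    rw [Nat.card_eq_fintype_card, Fintype.card_subtype]
    refine congrArg Finset.card ?_
    ext S
    simp [hP, Finset.subset_univ]
  have hcard2 : ∀ (A : Finset (Fin n)) (j : Fin n),
      Nat.card {S : Finset (Fin n) //
        S ⊆ A ∧ S.card = p ∧ j ∈ S ∧ (⋂ i ∈ S, h i).Nonempty} = d j A := by
    intro A j
    rw [Nat.card_eq_fintype_card, Fintype.card_subtype]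
    refine congrArg Finset.card ?_
    ext S
    simp only [Finset.mem_filter, Finset.mem_powerset, Finset.mem_univ, true_and, hP]
    tauto
  have hkn : (0:ℝ) < (k:ℝ)/n :=
    div_pos (by exact_mod_cast hk) (by exact_mod_cast hn)
  have main : ∀ m (A : Finset (Fin n)), A.card ≤ m →
      (k:ℝ)/n * A.card ≤ f A → 1 ≤ f A →
      ∃ B : Finset (Fin n), B.Nonempty ∧ ∀ j ∈ B, (k:ℝ)/n ≤ d j B := by
    intro m
    induction m with
    | zero =>
      intro A hA h1 h2
      obtain ⟨x, hx⟩ := hne A h2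
      have : 0 < A.card := Finset.card_pos.mpr ⟨x, hx⟩
      omega
    | succ m ih =>
      intro A hAm h1 h2
      by_cases hall : ∀ j ∈ A, (k:ℝ)/n ≤ d j A
      · exact ⟨A, hne A h2, hall⟩
      · push_neg at hall
        obtain ⟨j, hjA, hjd⟩ := hall
        have hce := Finset.card_erase_of_mem hjA
        have h0 : 1 ≤ A.card := Finset.card_pos.mpr ⟨j, hjA⟩
        have hcastc : ((A.erase j).card : ℝ) = (A.card : ℝ) - 1 := by
          rw [hce]; push_cast [Nat.cast_sub h0]; ring
        have hsplit' := hsplit A j hjA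
        have hfA' : (k:ℝ)/n * (A.erase j).card < f (A.erase j) := by
          have heq : (f (A.erase j) : ℝ) = (f A : ℝ) - (d j A : ℝ) := by
            rw [hsplit']; push_cast; ring
          rw [heq, hcastc]
          nlinarith
        have hf1 : 1 ≤ f (A.erase j) := by
          by_contra hc
          push_neg at hc
          have hz : f (A.erase j) = 0 := by omega
          rw [hz] at hfA'
          have : (0:ℝ) ≤ (k:ℝ)/n * (A.erase j).card := by positivity
          push_cast at hfA'
          linarith
        exact ih (A.erase j) (by omega) (le_of_lt hfA') hf1
  have hfu : k ≤ f Finset.univ := hcard1 ▸ hcount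
  have hstart : (k:ℝ)/n * (Finset.univ : Finset (Fin n)).card ≤ f Finset.univ := by
    rw [Finset.card_univ, Fintype.card_fin]
    have hn0 : (n:ℝ) ≠ 0 := by positivity
    rw [div_mul_cancel₀ _ hn0]
    exact_mod_cast hfu
  obtain ⟨B, hB, hBd⟩ := main (Finset.univ : Finset (Fin n)).card Finset.univ le_rfl
    hstart (le_trans hk hfu)
  exact ⟨B, hB, fun j hj => by rw [hcard2 B j]; exact_mod_cast hBd j hj⟩
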